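/- Let σ, τ > 0 and μ ∈ ℝ. Define r(β) = ∫_ℝ -Δ·Φ((Δ-β)/σ)·φ((Δ-μ)/τ) dΔ. Then β* = -μσ²/τ² is the unique global minimizer of r: for every β ≠ β*, r(β*) < r(β). (Theorem 2: the Bayes-optimal threshold when the sampling model is Gaussian with scale σ and the prior on the lift is N(μ, τ²) is β = -μσ²/τ².) -/
import Mathlib


open MeasureTheory Real

/-- The standard normal density. -/
noncomputable def stdNormalPDF (t : ℝ) : ℝ := Real.exp (-t ^ 2 / 2) / Real.sqrt (2 * Real.pi)

/-- The standard normal CDF. -/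
noncomputable def stdNormalCDF (t : ℝ) : ℝ := ∫ u in Set.Iic t, stdNormalPDF u

lemma stdNormalPDF_pos (t : ℝ) : 0 < stdNormalPDF t := by
  unfold stdNormalPDF
  positivity

lemma continuous_stdNormalPDF : Continuous stdNormalPDF := by
  unfold stdNormalPDF
  fun_prop

lemma stdNormalPDF_le (t : ℝ) : stdNormalPDF t ≤ (Real.sqrt (2 * Real.pi))⁻¹ := by
  unfold stdNormalPDF
  rw [div_eq_mul_inv]
  have h1 : Real.exp (-t ^ 2 / 2) ≤ 1 := by
    rw [Real.exp_le_one_iff]; nlinarith [sq_nonneg t]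
  have h2 : (0:ℝ) < (Real.sqrt (2 * Real.pi))⁻¹ := by positivity
  nlinarith

lemma stdNormalPDF_eq (t : ℝ) : stdNormalPDF t
    = Real.exp (-(1/2) * t ^ 2) * (Real.sqrt (2 * Real.pi))⁻¹ := by
  unfold stdNormalPDF
  rw [div_eq_mul_inv]
  ring_nf

lemma integrable_stdNormalPDF : Integrable stdNormalPDF := by
  have := (integrable_exp_neg_mul_sq (by norm_num : (0:ℝ) < 1/2)).mul_const
    (Real.sqrt (2 * Real.pi))⁻¹
  exact this.congr (Filter.Eventually.of_forall fun t => (stdNormalPDF_eq t).symm)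

lemma integral_stdNormalPDF : ∫ t, stdNormalPDF t = 1 := by
  simp_rw [stdNormalPDF_eq]
  rw [integral_mul_const, integral_gaussian]
  have : Real.pi / (1/2) = 2 * Real.pi := by ring
  rw [this, mul_inv_eq_one₀ (by positivity)]

lemma stdNormalCDF_nonneg (t : ℝ) : 0 ≤ stdNormalCDF t :=
  integral_nonneg fun x => (stdNormalPDF_pos x).le

lemma stdNormalCDF_le_one (t : ℝ) : stdNormalCDF t ≤ 1 := by
  rw [← integral_stdNormalPDF]
  exact setIntegral_le_integral integrable_stdNormalPDF
    (Filter.Eventually.of_forall fun x => (stdNormalPDF_pos x).le)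

lemma monotone_stdNormalCDF : Monotone stdNormalCDF := fun s t h =>
  setIntegral_mono_set integrable_stdNormalPDF.integrableOn
    (Filter.Eventually.of_forall fun x => (stdNormalPDF_pos x).le)
    (HasSubset.Subset.eventuallyLE (Set.Iic_subset_Iic.2 h))

lemma measurable_stdNormalCDF : Measurable stdNormalCDF :=
  monotone_stdNormalCDF.measurable

lemma integrable_gauss {b : ℝ} (hb : 0 < b) (m : ℝ) :
    Integrable (fun x : ℝ => Real.exp (-b * (x - m) ^ 2)) :=
  (integrable_exp_neg_mul_sq hb).comp_sub_right m

lemma integrable_id_mul_gauss {b : ℝ} (hb : 0 < b) (m : ℝ) :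
    Integrable (fun x : ℝ => x * Real.exp (-b * (x - m) ^ 2)) := by
  have h1 : Integrable (fun x : ℝ => (x - m) * Real.exp (-b * (x - m) ^ 2)) :=
    (integrable_mul_exp_neg_mul_sq hb).comp_sub_right m
  have h2 := (integrable_gauss hb m).const_mul m
  have := h1.add h2
  refine this.congr (Filter.Eventually.of_forall fun x => ?_)
  simp only [Pi.add_apply]
  ring

lemma integral_id_mul_gauss {b : ℝ} (hb : 0 < b) (m : ℝ) :
    ∫ x : ℝ, x * Real.exp (-b * (x - m) ^ 2) = m * Real.sqrt (Real.pi / b) := by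
  have htrans : ∫ x : ℝ, x * Real.exp (-b * (x - m) ^ 2)
      = ∫ x : ℝ, (x + m) * Real.exp (-b * x ^ 2) := by
    rw [← integral_add_right_eq_self (fun x : ℝ => x * Real.exp (-b * (x - m) ^ 2)) m]
    simp
  have hodd : ∫ x : ℝ, x * Real.exp (-b * x ^ 2) = 0 := by
    have h := integral_neg_eq_self (fun x : ℝ => x * Real.exp (-b * x ^ 2)) volume
    simp only [neg_mul, neg_sq] at h
    have : ∫ x : ℝ, -(x * Real.exp (-(b * x ^ 2))) = ∫ x : ℝ, x * Real.exp (-(b * x ^ 2)) := by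
      simpa using h
    rw [integral_neg] at this
    simp only [neg_mul] at *
    linarith
  rw [htrans]
  have hsplit : ∀ x : ℝ, (x + m) * Real.exp (-b * x ^ 2)
      = x * Real.exp (-b * x ^ 2) + m * Real.exp (-b * x ^ 2) := fun x => by ring
  simp_rw [hsplit]
  rw [integral_add (by simpa using integrable_id_mul_gauss hb 0)
    ((integrable_exp_neg_mul_sq hb).const_mul m), hodd, zero_add,
    MeasureTheory.integral_const_mul, integral_gaussian]

lemma stdNormalPDF_comp {τ : ℝ} (hτ : 0 < τ) (μ x : ℝ) :
    stdNormalPDF ((x - μ) / τ)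
      = Real.exp (-(1 / (2 * τ ^ 2)) * (x - μ) ^ 2) * (Real.sqrt (2 * Real.pi))⁻¹ := by
  rw [stdNormalPDF_eq]
  congr 1
  field_simp

lemma cdf_diff {σ : ℝ} (hσ : 0 < σ) (Δ β₁ β₂ : ℝ) :
    stdNormalCDF ((Δ - β₁) / σ) - stdNormalCDF ((Δ - β₂) / σ)
      = (1 / σ) * ∫ b in β₁..β₂, stdNormalPDF ((Δ - b) / σ) := by
  have h1 : (∫ b in β₁..β₂, stdNormalPDF ((Δ - b) / σ))
      = ∫ x in (Δ - β₂)..(Δ - β₁), stdNormalPDF (x / σ) :=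
    intervalIntegral.integral_comp_sub_left (fun y => stdNormalPDF (y / σ)) Δ
  rw [h1, intervalIntegral.integral_comp_div _ hσ.ne', smul_eq_mul, ← mul_assoc, one_div,
    inv_mul_cancel₀ hσ.ne', one_mul,
    ← intervalIntegral.integral_Iic_sub_Iic integrable_stdNormalPDF.integrableOn
      integrable_stdNormalPDF.integrableOn]
  rfl

lemma integrable_risk {σ τ : ℝ} (hσ : 0 < σ) (hτ : 0 < τ) (μ β : ℝ) :
    Integrable (fun Δ : ℝ =>
      -Δ * stdNormalCDF ((Δ - β) / σ) * stdNormalPDF ((Δ - μ) / τ)) := by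
  have hb : (0:ℝ) < 1 / (2 * τ ^ 2) := by positivity
  have hg : Integrable (fun Δ : ℝ =>
      |Δ| * Real.exp (-(1 / (2 * τ ^ 2)) * (Δ - μ) ^ 2) * (Real.sqrt (2 * Real.pi))⁻¹) := by
    have := (integrable_id_mul_gauss hb μ).abs
    refine (this.mul_const (Real.sqrt (2 * Real.pi))⁻¹).congr
      (Filter.Eventually.of_forall fun x => ?_)
    simp only []
    rw [abs_mul, abs_of_pos (Real.exp_pos _)]
  refine hg.mono' ?_ (Filter.Eventually.of_forall fun Δ => ?_)
  · refine Measurable.aestronglyMeasurable ?_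
    refine (Measurable.mul ?_ ?_)
    · exact (measurable_id.neg).mul (measurable_stdNormalCDF.comp (by fun_prop))
    · exact continuous_stdNormalPDF.measurable.comp (by fun_prop)
  · rw [Real.norm_eq_abs, abs_mul, abs_mul, abs_neg, abs_of_nonneg (stdNormalCDF_nonneg _),
      abs_of_pos (stdNormalPDF_pos _), stdNormalPDF_comp hτ]
    have h1 : stdNormalCDF ((Δ - β) / σ) ≤ 1 := stdNormalCDF_le_one _
    have h0 : 0 ≤ stdNormalCDF ((Δ - β) / σ) := stdNormalCDF_nonneg _
    have hE : (0:ℝ) < Real.exp (-(1 / (2 * τ ^ 2)) * (Δ - μ) ^ 2) := Real.exp_pos _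
    have hS : (0:ℝ) < (Real.sqrt (2 * Real.pi))⁻¹ := by positivity
    have habs : (0:ℝ) ≤ |Δ| := abs_nonneg _
    calc |Δ| * stdNormalCDF ((Δ - β) / σ) *
          (Real.exp (-(1 / (2 * τ ^ 2)) * (Δ - μ) ^ 2) * (Real.sqrt (2 * Real.pi))⁻¹)
        ≤ |Δ| * 1 * (Real.exp (-(1 / (2 * τ ^ 2)) * (Δ - μ) ^ 2) * (Real.sqrt (2 * Real.pi))⁻¹) := by
          have := mul_le_mul_of_nonneg_left h1 habs
          exact mul_le_mul_of_nonneg_right this (by positivity)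
      _ = |Δ| * Real.exp (-(1 / (2 * τ ^ 2)) * (Δ - μ) ^ 2) * (Real.sqrt (2 * Real.pi))⁻¹ := by
          ring

lemma inner_eval {σ τ : ℝ} (hσ : 0 < σ) (hτ : 0 < τ) (μ b : ℝ) :
    (∫ Δ : ℝ, Δ * stdNormalPDF ((Δ - b) / σ) * stdNormalPDF ((Δ - μ) / τ))
      = (μ * σ ^ 2 + b * τ ^ 2) / (σ ^ 2 + τ ^ 2)
        * Real.sqrt (Real.pi / ((σ ^ 2 + τ ^ 2) / (2 * σ ^ 2 * τ ^ 2)))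
        * (Real.exp (-(b - μ) ^ 2 / (2 * (σ ^ 2 + τ ^ 2))) / (2 * Real.pi)) := by
  have hσ' := hσ.ne'
  have hτ' := hτ.ne'
  have hst : (0:ℝ) < σ ^ 2 + τ ^ 2 := by positivity
  set A := (σ ^ 2 + τ ^ 2) / (2 * σ ^ 2 * τ ^ 2) with hAdef
  set m := (μ * σ ^ 2 + b * τ ^ 2) / (σ ^ 2 + τ ^ 2) with hmdef
  have hA : 0 < A := by positivity
  have hs : Real.sqrt (2 * Real.pi) * Real.sqrt (2 * Real.pi) = 2 * Real.pi :=
    Real.mul_self_sqrt (by positivity)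
  have hpt : ∀ Δ : ℝ, Δ * stdNormalPDF ((Δ - b) / σ) * stdNormalPDF ((Δ - μ) / τ)
      = (Δ * Real.exp (-A * (Δ - m) ^ 2))
        * (Real.exp (-(b - μ) ^ 2 / (2 * (σ ^ 2 + τ ^ 2))) / (2 * Real.pi)) := by
    intro Δ
    unfold stdNormalPDF
    have hexp : -((Δ - b) / σ) ^ 2 / 2 + -((Δ - μ) / τ) ^ 2 / 2
        = -A * (Δ - m) ^ 2 + -(b - μ) ^ 2 / (2 * (σ ^ 2 + τ ^ 2)) := by
      rw [hAdef, hmdef]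
      field_simp
      ring
    rw [mul_assoc, div_mul_div_comm, ← Real.exp_add, hs, hexp, Real.exp_add]
    ring
  simp_rw [hpt]
  rw [MeasureTheory.integral_mul_const, integral_id_mul_gauss hA m]

lemma risk_diff {σ τ : ℝ} (hσ : 0 < σ) (hτ : 0 < τ) (μ β₁ β₂ : ℝ) (h : β₁ ≤ β₂) :
    (∫ Δ : ℝ, -Δ * stdNormalCDF ((Δ - β₂) / σ) * stdNormalPDF ((Δ - μ) / τ))
      - (∫ Δ : ℝ, -Δ * stdNormalCDF ((Δ - β₁) / σ) * stdNormalPDF ((Δ - μ) / τ))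
      = (1 / σ) * ∫ b in Set.Ioc β₁ β₂,
          ∫ Δ : ℝ, Δ * stdNormalPDF ((Δ - b) / σ) * stdNormalPDF ((Δ - μ) / τ) := by
  haveI hfin : IsFiniteMeasure (volume.restrict (Set.Ioc β₁ β₂)) :=
    ⟨by rw [Measure.restrict_apply_univ]; exact measure_Ioc_lt_top⟩
  have hb : (0:ℝ) < 1 / (2 * τ ^ 2) := by positivity
  have habs : Integrable (fun Δ : ℝ => |Δ| * stdNormalPDF ((Δ - μ) / τ)) := by
    have := ((integrable_id_mul_gauss hb μ).abs).mul_const (Real.sqrt (2 * Real.pi))⁻¹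
    refine this.congr (Filter.Eventually.of_forall fun x => ?_)
    simp only []
    rw [abs_mul, abs_of_pos (Real.exp_pos _), stdNormalPDF_comp hτ]
    ring
  have hint : Integrable
      (Function.uncurry fun Δ b : ℝ =>
        Δ * stdNormalPDF ((Δ - b) / σ) * stdNormalPDF ((Δ - μ) / τ))
      (volume.prod (volume.restrict (Set.Ioc β₁ β₂))) := by
    have hgint : Integrable
        (fun p : ℝ × ℝ => (|p.1| * stdNormalPDF ((p.1 - μ) / τ)) * (Real.sqrt (2 * Real.pi))⁻¹)
        (volume.prod (volume.restrict (Set.Ioc β₁ β₂))) :=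
      habs.mul_prod (integrable_const _)
    refine hgint.mono' ?_ (Filter.Eventually.of_forall fun p => ?_)
    · refine Continuous.aestronglyMeasurable ?_
      exact (continuous_fst.mul (continuous_stdNormalPDF.comp
          ((continuous_fst.sub continuous_snd).div_const σ))).mul
        (continuous_stdNormalPDF.comp ((continuous_fst.sub continuous_const).div_const τ))
    · simp only [Function.uncurry]
      rw [Real.norm_eq_abs, abs_mul, abs_mul, abs_of_pos (stdNormalPDF_pos _),
        abs_of_pos (stdNormalPDF_pos _)]
      have h1 : stdNormalPDF ((p.1 - p.2) / σ) ≤ (Real.sqrt (2 * Real.pi))⁻¹ :=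
        stdNormalPDF_le _
      have h2 : (0:ℝ) < stdNormalPDF ((p.1 - μ) / τ) := stdNormalPDF_pos _
      calc |p.1| * stdNormalPDF ((p.1 - p.2) / σ) * stdNormalPDF ((p.1 - μ) / τ)
          ≤ |p.1| * (Real.sqrt (2 * Real.pi))⁻¹ * stdNormalPDF ((p.1 - μ) / τ) := by
            refine mul_le_mul_of_nonneg_right ?_ h2.le
            exact mul_le_mul_of_nonneg_left h1 (abs_nonneg _)
        _ = |p.1| * stdNormalPDF ((p.1 - μ) / τ) * (Real.sqrt (2 * Real.pi))⁻¹ := by ring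
  rw [← integral_sub (integrable_risk hσ hτ μ β₂) (integrable_risk hσ hτ μ β₁)]
  have hpt : ∀ Δ : ℝ,
      (-Δ * stdNormalCDF ((Δ - β₂) / σ) * stdNormalPDF ((Δ - μ) / τ)
        - -Δ * stdNormalCDF ((Δ - β₁) / σ) * stdNormalPDF ((Δ - μ) / τ))
      = (1 / σ) * ∫ b in Set.Ioc β₁ β₂,
          Δ * stdNormalPDF ((Δ - b) / σ) * stdNormalPDF ((Δ - μ) / τ) := by
    intro Δ
    have h2 := cdf_diff hσ Δ β₁ β₂
    rw [intervalIntegral.integral_of_le h] at h2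
    have lhs_eq : -Δ * stdNormalCDF ((Δ - β₂) / σ) * stdNormalPDF ((Δ - μ) / τ)
        - -Δ * stdNormalCDF ((Δ - β₁) / σ) * stdNormalPDF ((Δ - μ) / τ)
        = Δ * stdNormalPDF ((Δ - μ) / τ)
            * (stdNormalCDF ((Δ - β₁) / σ) - stdNormalCDF ((Δ - β₂) / σ)) := by ring
    have hswap : (∫ b in Set.Ioc β₁ β₂,
        Δ * stdNormalPDF ((Δ - b) / σ) * stdNormalPDF ((Δ - μ) / τ))
        = (Δ * stdNormalPDF ((Δ - μ) / τ)) * ∫ b in Set.Ioc β₁ β₂, stdNormalPDF ((Δ - b) / σ) := by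
      rw [← MeasureTheory.integral_const_mul]
      refine integral_congr_ae (Filter.Eventually.of_forall fun bb => ?_)
      ring
    rw [lhs_eq, h2, hswap]
    ring
  rw [show (fun Δ : ℝ =>
      -Δ * stdNormalCDF ((Δ - β₂) / σ) * stdNormalPDF ((Δ - μ) / τ)
        - -Δ * stdNormalCDF ((Δ - β₁) / σ) * stdNormalPDF ((Δ - μ) / τ))
      = fun Δ : ℝ => (1 / σ) * ∫ b in Set.Ioc β₁ β₂,
          Δ * stdNormalPDF ((Δ - b) / σ) * stdNormalPDF ((Δ - μ) / τ) from funext hpt,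
    MeasureTheory.integral_const_mul]
  congr 1
  exact integral_integral_swap hint

/-- Theorem 2 of the paper: with a Gaussian sampling model of scale `σ` and a Gaussian
prior `N(μ, τ²)` on the lift, the threshold `β* = -μσ²/τ²` is the unique global minimizer of
the Bayes risk `r(β) = ∫ -Δ·Φ((Δ-β)/σ)·φ((Δ-μ)/τ) dΔ`. -/
theorem bayesOptimal_threshold_gaussian (σ τ μ : ℝ) (hσ : 0 < σ) (hτ : 0 < τ)
    (r : ℝ → ℝ)
    (hr : ∀ β, r β = ∫ Δ : ℝ, -Δ * stdNormalCDF ((Δ - β) / σ) * stdNormalPDF ((Δ - μ) / τ)) :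
    ∀ β : ℝ, β ≠ -μ * σ ^ 2 / τ ^ 2 → r (-μ * σ ^ 2 / τ ^ 2) < r β := by
  intro β hβ
  set β' := -μ * σ ^ 2 / τ ^ 2 with hβ'def
  have hst : (0:ℝ) < σ ^ 2 + τ ^ 2 := by positivity
  set c := Real.sqrt (Real.pi / ((σ ^ 2 + τ ^ 2) / (2 * σ ^ 2 * τ ^ 2))) with hcdef
  have hc : 0 < c := by rw [hcdef]; positivity
  set J : ℝ → ℝ := fun b => (μ * σ ^ 2 + b * τ ^ 2) / (σ ^ 2 + τ ^ 2) * c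
      * (Real.exp (-(b - μ) ^ 2 / (2 * (σ ^ 2 + τ ^ 2))) / (2 * Real.pi)) with hJdef
  have hJcont : Continuous J := by
    apply Continuous.mul
    · exact ((continuous_const.add (continuous_id.mul continuous_const)).div_const _).mul
        continuous_const
    · exact (Real.continuous_exp.comp (by fun_prop)).div_const _
  have hβ'mul : β' * τ ^ 2 = -(μ * σ ^ 2) := by
    rw [hβ'def]; field_simp
  have hJpos : ∀ b, β' < b → 0 < J b := by
    intro b hb
    have hnum : 0 < μ * σ ^ 2 + b * τ ^ 2 := by
      have := mul_pos (sub_pos.2 hb) (pow_pos hτ 2)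
      nlinarith
    rw [hJdef]
    have := Real.exp_pos (-(b - μ) ^ 2 / (2 * (σ ^ 2 + τ ^ 2)))
    positivity
  have hJneg : ∀ b, b < β' → J b < 0 := by
    intro b hb
    have hnum : μ * σ ^ 2 + b * τ ^ 2 < 0 := by
      have := mul_pos (sub_pos.2 hb) (pow_pos hτ 2)
      nlinarith
    rw [hJdef]
    have he := Real.exp_pos (-(b - μ) ^ 2 / (2 * (σ ^ 2 + τ ^ 2)))
    have h1 : (μ * σ ^ 2 + b * τ ^ 2) / (σ ^ 2 + τ ^ 2) * c < 0 :=
      mul_neg_of_neg_of_pos (div_neg_of_neg_of_pos hnum hst) hc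
    exact mul_neg_of_neg_of_pos h1 (by positivity)
  rcases lt_or_gt_of_ne hβ with hlt | hgt
  · -- β < β' : use risk_diff β β'
    have hd := risk_diff hσ hτ μ β β' hlt.le
    rw [← hr β', ← hr β] at hd
    have hIoc : (∫ b in Set.Ioc β β',
        ∫ Δ : ℝ, Δ * stdNormalPDF ((Δ - b) / σ) * stdNormalPDF ((Δ - μ) / τ))
        = ∫ b in β..β', J b := by
      rw [intervalIntegral.integral_of_le hlt.le]
      exact setIntegral_congr_ae measurableSet_Ioc
        (Filter.Eventually.of_forall fun b _ => by
          rw [inner_eval hσ hτ μ b, hJdef])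
    rw [hIoc] at hd
    have hpos : 0 < ∫ b in β..β', -J b := by
      refine intervalIntegral.intervalIntegral_pos_of_pos_on ((hJcont.neg).intervalIntegrable _ _) ?_ hlt
      intro x hx
      simpa using hJneg x hx.2
    rw [intervalIntegral.integral_neg] at hpos
    have hneg : (∫ b in β..β', J b) < 0 := by linarith
    have : r β' - r β < 0 := by
      rw [hd]
      exact mul_neg_of_pos_of_neg (by positivity) hneg
    linarith
  · -- β' < β
    have hd := risk_diff hσ hτ μ β' β hgt.le
    rw [← hr β, ← hr β'] at hd
    have hIoc : (∫ b in Set.Ioc β' β,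
        ∫ Δ : ℝ, Δ * stdNormalPDF ((Δ - b) / σ) * stdNormalPDF ((Δ - μ) / τ))
        = ∫ b in β'..β, J b := by
      rw [intervalIntegral.integral_of_le hgt.le]
      exact setIntegral_congr_ae measurableSet_Ioc
        (Filter.Eventually.of_forall fun b _ => by
          rw [inner_eval hσ hτ μ b, hJdef])
    rw [hIoc] at hd
    have hpos : 0 < ∫ b in β'..β, J b := by
      refine intervalIntegral.intervalIntegral_pos_of_pos_on (hJcont.intervalIntegrable _ _) ?_ hgt
      intro x hx
      exact hJpos x hx.1
    have : 0 < r β - r β' := by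
      rw [hd]
      exact mul_pos (by positivity) hpos
    linarith
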